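/- arXiv:1604.02405 — 9 statements merged into one kernel-verified Lean document; each statement's English description precedes it below -/
import Mathlib

section
/- Coarse property C is a coarse invariant: if f : X → Y is a coarsely uniform embedding of coarse spaces and Y has coarse property C, then X has coarse property C. In particular, coarsely equivalent coarse spaces either both have or both lack coarse property C. -/
open Set
open scoped ENNReal

universe u v

/-- A coarse structure on a set `X`: a collection of entourages closed under
subsets, finite unions, inverses and compositions, containing the diagonal. -/
structure CoarseStructure (X : Type u) where
  IsEnt : Set (X × X) → Prop
  subset_mem : ∀ {E F : Set (X × X)}, IsEnt F → E ⊆ F → IsEnt E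
  union_mem : ∀ {E F : Set (X × X)}, IsEnt E → IsEnt F → IsEnt (E ∪ F)
  diag_mem : IsEnt {p : X × X | p.1 = p.2}
  inv_mem : ∀ {E : Set (X × X)}, IsEnt E → IsEnt {p : X × X | (p.2, p.1) ∈ E}
  comp_mem : ∀ {E F : Set (X × X)}, IsEnt E → IsEnt F →
    IsEnt {p : X × X | ∃ y, (p.1, y) ∈ E ∧ (y, p.2) ∈ F}

variable {X : Type u} {Y : Type v}

/-- Composition of relations. -/
def rcomp (E F : Set (X × X)) : Set (X × X) :=
  {p : X × X | ∃ y, (p.1, y) ∈ E ∧ (y, p.2) ∈ F}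

/-- Iterated composition `E^k`, with `E^0` the diagonal. -/
def rpow (E : Set (X × X)) : ℕ → Set (X × X)
  | 0 => {p : X × X | p.1 = p.2}
  | k + 1 => rcomp (rpow E k) E

/-- A relation is symmetric if it equals its inverse. -/
def SymmRel (E : Set (X × X)) : Prop := ∀ p : X × X, p ∈ E → (p.2, p.1) ∈ E

/-- `Δ_U = ⋃_{A ∈ U} A × A`. -/
def famDiag (U : Set (Set X)) : Set (X × X) := ⋃ A ∈ U, A ×ˢ A

/-- A family of subsets is uniformly bounded if `⋃ A × A` is an entourage. -/
def UnifBdd (C : CoarseStructure X) (U : Set (Set X)) : Prop := C.IsEnt (famDiag U)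

/-- A family of subsets is `L`-disjoint. -/
def LDisj (L : Set (X × X)) (U : Set (Set X)) : Prop :=
  ∀ A ∈ U, ∀ B ∈ U, A ≠ B → (A ×ˢ B) ∩ L = ∅

/-- Coarse property C. -/
def CoarsePropC (C : CoarseStructure X) : Prop :=
  ∀ L : ℕ → Set (X × X), (∀ i, C.IsEnt (L i)) → (∀ i, L i ⊆ L (i + 1)) →
    ∃ n : ℕ, ∃ U : ℕ → Set (Set X),
      (∀ x : X, ∃ i < n, ∃ A ∈ U i, x ∈ A) ∧
      (∀ i < n, UnifBdd C (U i)) ∧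
      (∀ i < n, LDisj (L i) (U i))

/-- Coarse property C for a subspace `S ⊆ X` (with the inherited coarse structure). -/
def CoarsePropCOn (C : CoarseStructure X) (S : Set X) : Prop :=
  ∀ L : ℕ → Set (X × X), (∀ i, C.IsEnt (L i)) → (∀ i, L i ⊆ L (i + 1)) →
    ∃ n : ℕ, ∃ U : ℕ → Set (Set X),
      (∀ i < n, ∀ A ∈ U i, A ⊆ S) ∧
      (∀ x ∈ S, ∃ i < n, ∃ A ∈ U i, x ∈ A) ∧
      (∀ i < n, UnifBdd C (U i)) ∧
      (∀ i < n, LDisj (L i) (U i))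

/-- Coarse asymptotic dimension at most `n`. -/
def CoarseASDimLE (C : CoarseStructure X) (n : ℕ) : Prop :=
  ∀ L : Set (X × X), C.IsEnt L → ∃ U : ℕ → Set (Set X),
    (∀ x : X, ∃ i ≤ n, ∃ A ∈ U i, x ∈ A) ∧
    (∀ i ≤ n, UnifBdd C (U i)) ∧
    (∀ i ≤ n, LDisj L (U i))

/-- The extended natural-valued metric `D(x,y) = min {k : (x,y) ∈ E^k}` induced by `E`. -/
noncomputable def eDist (E : Set (X × X)) (x y : X) : ℕ∞ :=
  sInf ((fun k : ℕ => (k : ℕ∞)) '' {k : ℕ | (x, y) ∈ rpow E k})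

/-- Distance from a point to a set, for the metric induced by `E`. -/
noncomputable def eDistSet (E : Set (X × X)) (x : X) (A : Set X) : ℕ∞ :=
  sInf (eDist E x '' A)

/-- `ℝ≥0∞`-valued version of the metric induced by `E`. -/
noncomputable def nDist (E : Set (X × X)) (x y : X) : ℝ≥0∞ :=
  sInf ((fun k : ℕ => (k : ℝ≥0∞)) '' {k : ℕ | (x, y) ∈ rpow E k})

/-- `ℝ≥0∞`-valued distance from a point to a set. -/
noncomputable def nDistSet (E : Set (X × X)) (x : X) (A : Set X) : ℝ≥0∞ :=
  sInf (nDist E x '' A)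

/-- The map `f × f`. -/
def mapProd (f : X → Y) : X × X → Y × Y := fun p => (f p.1, f p.2)

/-- Bornologous maps: images of entourages are entourages. -/
def Bornologous (CX : CoarseStructure X) (CY : CoarseStructure Y) (f : X → Y) : Prop :=
  ∀ E : Set (X × X), CX.IsEnt E → CY.IsEnt (mapProd f '' E)

/-- Proper maps: preimages of bounded sets are bounded. -/
def ProperCoarse (CX : CoarseStructure X) (CY : CoarseStructure Y) (f : X → Y) : Prop :=
  ∀ B : Set Y, CY.IsEnt (B ×ˢ B) → CX.IsEnt ((f ⁻¹' B) ×ˢ (f ⁻¹' B))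

/-- A coarse map is proper and bornologous. -/
def CoarseMap (CX : CoarseStructure X) (CY : CoarseStructure Y) (f : X → Y) : Prop :=
  ProperCoarse CX CY f ∧ Bornologous CX CY f

/-- A coarsely uniform embedding. -/
def CoarseUnifEmb (CX : CoarseStructure X) (CY : CoarseStructure Y) (f : X → Y) : Prop :=
  ProperCoarse CX CY f ∧ Bornologous CX CY f ∧
    ∀ F : Set (Y × Y), CY.IsEnt F → CX.IsEnt (mapProd f ⁻¹' F)

/-- Two maps are close if the set of pairs of their values is an entourage. -/
def Close (C : CoarseStructure X) (f g : Y → X) : Prop :=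
  C.IsEnt (Set.range fun y => (f y, g y))

/-- Coarse equivalence of coarse spaces. -/
def CoarseEquiv (CX : CoarseStructure X) (CY : CoarseStructure Y) : Prop :=
  ∃ f : X → Y, ∃ g : Y → X, CoarseMap CX CY f ∧ CoarseMap CY CX g ∧
    Close CX (g ∘ f) id ∧ Close CY (f ∘ g) id

/-- A weak `(L,d)`-decomposition of the set `Z` over the family `Y`. -/
def WeakDecomp (L : Set (X × X)) (d : ℕ) (Z : Set X) (Y : Set (Set X)) : Prop :=
  ∃ P : Fin d → Set (Set X), (∀ i, P i ⊆ Y) ∧ (∀ i, LDisj L (P i)) ∧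
    Z = ⋃ i, ⋃ A ∈ P i, A

/-- A family admits a weak `(L,d)`-decomposition over `Y` if each member does. -/
def FamDecomp (L : Set (X × X)) (d : ℕ) (F Y : Set (Set X)) : Prop :=
  ∀ Z ∈ F, WeakDecomp L d Z Y

/-- Straight finite coarse decomposition complexity of a family of subsets. -/
def sFCDC (C : CoarseStructure X) (F : Set (Set X)) : Prop :=
  ∀ L : ℕ → Set (X × X), (∀ i, C.IsEnt (L i)) → (∀ i, L i ⊆ L (i + 1)) →
    ∃ n : ℕ, ∃ Y : ℕ → Set (Set X), Y 0 = F ∧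
      (∀ i < n, FamDecomp (L i) 2 (Y i) (Y (i + 1))) ∧ UnifBdd C (Y n)

/-- Finite weak coarse decomposition complexity (one-step form). -/
def FWCDC (C : CoarseStructure X) : Prop :=
  ∀ L : Set (X × X), C.IsEnt L →
    ∃ d : ℕ, ∃ Y : Set (Set X), UnifBdd C Y ∧ WeakDecomp L d Set.univ Y

/-- `N_L(V, U)`. -/
def NL (L : Set (X × X)) (U : Set (Set X)) (V : Set X) : Set X :=
  V ∪ ⋃ A ∈ {A ∈ U | ((A ×ˢ V) ∩ L).Nonempty}, A

/-- The `L`-saturated union `V ∪_L U`. -/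
def satUnion (L : Set (X × X)) (V U : Set (Set X)) : Set (Set X) :=
  (NL L U '' V) ∪ {A ∈ U | ∀ W ∈ V, (A ×ˢ W) ∩ L = ∅}

/-- The bounded coarse structure of a (pseudo)metric space. -/
def boundedCoarse (X : Type u) [PseudoMetricSpace X] : CoarseStructure X where
  IsEnt E := ∃ R : ℝ, ∀ p ∈ E, dist p.1 p.2 ≤ R
  subset_mem := fun h hsub => ⟨h.choose, fun p hp => h.choose_spec p (hsub hp)⟩
  union_mem := fun hE hF => ⟨max hE.choose hF.choose, by
    rintro p (hp | hp)
    · exact (hE.choose_spec p hp).trans (le_max_left _ _)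
    · exact (hF.choose_spec p hp).trans (le_max_right _ _)⟩
  diag_mem := ⟨0, by
    rintro ⟨a, b⟩ hab
    simp only [Set.mem_setOf_eq] at hab
    simp [hab]⟩
  inv_mem := fun hE => ⟨hE.choose, by
    intro p hp
    rw [dist_comm]
    exact hE.choose_spec _ hp⟩
  comp_mem := fun hE hF => ⟨hE.choose + hF.choose, by
    rintro p ⟨y, h1, h2⟩
    calc dist p.1 p.2 ≤ dist p.1 y + dist y p.2 := dist_triangle _ _ _
      _ ≤ _ := add_le_add (hE.choose_spec _ h1) (hF.choose_spec _ h2)⟩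

/-- Uniformly bounded family of subsets of a metric space. -/
def MUnifBdd {X : Type u} [PseudoMetricSpace X] (U : Set (Set X)) : Prop :=
  ∃ B : ℝ, ∀ A ∈ U, ∀ x ∈ A, ∀ y ∈ A, dist x y ≤ B

/-- `R`-disjoint family of subsets of a metric space. -/
def MDisj {X : Type u} [PseudoMetricSpace X] (R : ℝ) (U : Set (Set X)) : Prop :=
  ∀ A ∈ U, ∀ B ∈ U, A ≠ B → ∀ x ∈ A, ∀ y ∈ B, R < dist x y

/-- Asymptotic property C of a metric space. -/
def AsympPropC (X : Type u) [PseudoMetricSpace X] : Prop :=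
  ∀ R : ℕ → ℝ, (∀ i, 0 < R i) → (∀ i, R i ≤ R (i + 1)) →
    ∃ n : ℕ, ∃ U : ℕ → Set (Set X),
      (∀ x : X, ∃ i < n, ∃ A ∈ U i, x ∈ A) ∧
      (∀ i < n, MUnifBdd (U i)) ∧
      (∀ i < n, MDisj (R i) (U i))

/-- Coercion of pairs in a subspace to pairs in the ambient space. -/
def sprod (S : Set X) : S × S → X × X := fun p => ((p.1 : X), (p.2 : X))

/-- The subspace coarse structure. -/
def CoarseStructure.restrict (C : CoarseStructure X) (S : Set X) : CoarseStructure S where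
  IsEnt E := C.IsEnt (sprod S '' E)
  subset_mem := fun h hsub => C.subset_mem h (Set.image_mono hsub)
  union_mem := fun {E F} h1 h2 => by
    show C.IsEnt (sprod S '' (E ∪ F))
    rw [Set.image_union]; exact C.union_mem h1 h2
  diag_mem := C.subset_mem C.diag_mem (by
    rintro q ⟨p, hp, rfl⟩
    simp only [Set.mem_setOf_eq] at hp ⊢
    exact congrArg Subtype.val hp)
  inv_mem := fun {E} h => C.subset_mem (C.inv_mem h) (by
    rintro q ⟨p, hp, rfl⟩
    exact ⟨(p.2, p.1), hp, rfl⟩)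
  comp_mem := fun {E F} hE hF => C.subset_mem (C.comp_mem hE hF) (by
    rintro q ⟨p, ⟨y, h1, h2⟩, rfl⟩
    exact ⟨(y : X), ⟨(p.1, y), h1, rfl⟩, ⟨(y, p.2), h2, rfl⟩⟩)

/-- First-coordinate projection of a relation on a product. -/
def pfst : (X × Y) × (X × Y) → X × X := fun p => (p.1.1, p.2.1)

/-- Second-coordinate projection of a relation on a product. -/
def psnd : (X × Y) × (X × Y) → Y × Y := fun p => (p.1.2, p.2.2)

/-- The product coarse structure. -/
def prodCoarse (CX : CoarseStructure X) (CY : CoarseStructure Y) :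
    CoarseStructure (X × Y) where
  IsEnt E := CX.IsEnt (pfst '' E) ∧ CY.IsEnt (psnd '' E)
  subset_mem := fun h hsub =>
    ⟨CX.subset_mem h.1 (Set.image_mono hsub), CY.subset_mem h.2 (Set.image_mono hsub)⟩
  union_mem := fun {E F} h1 h2 => by
    constructor
    · show CX.IsEnt (pfst '' (E ∪ F))
      rw [Set.image_union]; exact CX.union_mem h1.1 h2.1
    · show CY.IsEnt (psnd '' (E ∪ F))
      rw [Set.image_union]; exact CY.union_mem h1.2 h2.2
  diag_mem := by
    constructor
    · exact CX.subset_mem CX.diag_mem (by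
        rintro q ⟨p, hp, rfl⟩
        simp only [Set.mem_setOf_eq] at hp ⊢
        exact congrArg Prod.fst hp)
    · exact CY.subset_mem CY.diag_mem (by
        rintro q ⟨p, hp, rfl⟩
        simp only [Set.mem_setOf_eq] at hp ⊢
        exact congrArg Prod.snd hp)
  inv_mem := fun {E} h => by
    constructor
    · exact CX.subset_mem (CX.inv_mem h.1) (by
        rintro q ⟨p, hp, rfl⟩
        exact ⟨(p.2, p.1), hp, rfl⟩)
    · exact CY.subset_mem (CY.inv_mem h.2) (by
        rintro q ⟨p, hp, rfl⟩
        exact ⟨(p.2, p.1), hp, rfl⟩)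
  comp_mem := fun {E F} hE hF => by
    constructor
    · exact CX.subset_mem (CX.comp_mem hE.1 hF.1) (by
        rintro q ⟨p, ⟨y, h1, h2⟩, rfl⟩
        exact ⟨y.1, ⟨(p.1, y), h1, rfl⟩, ⟨(y, p.2), h2, rfl⟩⟩)
    · exact CY.subset_mem (CY.comp_mem hE.2 hF.2) (by
        rintro q ⟨p, ⟨y, h1, h2⟩, rfl⟩
        exact ⟨y.2, ⟨(p.1, y), h1, rfl⟩, ⟨(y, p.2), h2, rfl⟩⟩)

/-- Game-theoretic coarse property C: Player 2 has a winning strategy. -/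
def GamePropC (C : CoarseStructure X) : Prop :=
  ∃ σ : ℕ → (ℕ → Set (X × X)) → Set (Set X),
    (∀ n : ℕ, ∀ L L' : ℕ → Set (X × X), (∀ i ≤ n, L i = L' i) → σ n L = σ n L') ∧
    ∀ L : ℕ → Set (X × X), (∀ i, C.IsEnt (L i)) →
      ∃ k : ℕ, (∀ i ≤ k, UnifBdd C (σ i L) ∧ LDisj (L i) (σ i L)) ∧
        ∀ x : X, ∃ i ≤ k, ∃ A ∈ σ i L, x ∈ A

theorem famDiag_image_preimage_subset (f : X → Y) (V : Set (Set Y)) :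
    famDiag ((f ⁻¹' ·) '' V) ⊆ mapProd f ⁻¹' famDiag V := by
  intro p hp
  obtain ⟨_, ⟨B, hB, rfl⟩, hp⟩ := mem_iUnion₂.mp hp
  exact mem_iUnion₂.mpr ⟨B, hB, hp⟩

theorem UnifBdd.preimage {CX : CoarseStructure X} {CY : CoarseStructure Y} {f : X → Y}
    (hpull : ∀ F : Set (Y × Y), CY.IsEnt F → CX.IsEnt (mapProd f ⁻¹' F))
    {V : Set (Set Y)} (hV : UnifBdd CY V) : UnifBdd CX ((f ⁻¹' ·) '' V) :=
  CX.subset_mem (hpull _ hV) (famDiag_image_preimage_subset f V)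

theorem LDisj.preimage {f : X → Y} {L : Set (X × X)} {V : Set (Set Y)}
    (hV : LDisj (mapProd f '' L) V) : LDisj L ((f ⁻¹' ·) '' V) := by
  rintro _ ⟨B, hB, rfl⟩ _ ⟨B', hB', rfl⟩ hne
  have hBB' : B ≠ B' := fun h => hne (congrArg _ h)
  refine eq_empty_of_forall_notMem fun p ⟨hp, hpL⟩ => ?_
  exact (hV B hB B' hB' hBB').subset ⟨hp, mem_image_of_mem _ hpL⟩

/-- coarse property C pulls back along coarsely uniform embeddings;
in particular it is a coarse invariant. -/
theorem stmt4 {X : Type u} {Y : Type v} (CX : CoarseStructure X) (CY : CoarseStructure Y)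
    (f : X → Y) (hf : CoarseUnifEmb CX CY f) (hY : CoarsePropC CY) :
    CoarsePropC CX := by
  obtain ⟨-, hborn, hpull⟩ := hf
  intro L hL hmono
  obtain ⟨n, V, hcov, hbdd, hdisj⟩ := hY (fun i => mapProd f '' L i)
    (fun i => hborn _ (hL i)) (fun i => image_mono (hmono i))
  refine ⟨n, fun i => (f ⁻¹' ·) '' V i, fun x => ?_, fun i hi => (hbdd i hi).preimage hpull,
    fun i hi => (hdisj i hi).preimage⟩
  obtain ⟨i, hi, B, hB, hx⟩ := hcov (f x)
  exact ⟨i, hi, f ⁻¹' B, mem_image_of_mem _ hB, hx⟩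
end

section
/- Let (X, E) be a coarse space, L a symmetric entourage containing the diagonal, U a uniformly bounded L-disjoint family of subsets of X, and V a uniformly bounded K-disjoint family of subsets of X, where K = L ∪ (L ∘ Δ_U ∘ L) ∪ (L ∘ Δ_U ∘ L ∘ Δ_U ∘ L) and Δ_U = ∪_{U∈U} U × U. Then the L-saturated union V ∪_L U is L-disjoint and uniformly bounded. -/
/-!
A point of `N_L(V, U)` either lies in `V` or lies in a member of `U` that is `L`-close to `V`;
in both cases it is related to a point of `V` by `Δ ∪ Δ_U ∘ L`. So if two saturations
`N_L(V₁, U)` and `N_L(V₂, U)` are `L`-close, then `V₁` and `V₂` are `K`-close, the three terms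
of `K` accounting for how many of the two points had to pass through a member of `U`. A member
of `U` that is `L`-close to a saturation `N_L(V, U)` must, by `L`-disjointness of `U`, be
`L`-close to `V` itself, so it is excluded from the second part of `V ∪_L U`.
For boundedness, `N_L(V, U) × N_L(V, U) ⊆ F ∘ Δ_V ∘ F⁻¹` with `F = Δ ∪ Δ_U ∘ L`.
-/

open Set
open scoped ENNReal

universe u v

variable {X : Type u} {Y : Type v}

def LClose (L : Set (X × X)) (A B : Set X) : Prop := ((A ×ˢ B) ∩ L).Nonempty

section Relations

variable {L E F : Set (X × X)} {U V W : Set (Set X)} {A B : Set X}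

theorem lClose_iff : LClose L A B ↔ ∃ a ∈ A, ∃ b ∈ B, (a, b) ∈ L := by
  simp only [LClose, Set.Nonempty, Prod.exists, mem_inter_iff, mem_prod, and_assoc,
    exists_and_left]

theorem LClose.symm (hL : SymmRel L) (h : LClose L A B) : LClose L B A := by
  obtain ⟨a, ha, b, hb, hab⟩ := lClose_iff.1 h
  exact lClose_iff.2 ⟨b, hb, a, ha, hL _ hab⟩

theorem lDisj_iff : LDisj L W ↔ ∀ A ∈ W, ∀ B ∈ W, LClose L A B → A = B := by
  simp only [LDisj, LClose, ← not_nonempty_iff_eq_empty]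
  exact forall₂_congr fun A _ => forall₂_congr fun B _ => not_imp_not

theorem mem_famDiag {a b : X} : (a, b) ∈ famDiag U ↔ ∃ A ∈ U, a ∈ A ∧ b ∈ A := by
  simp only [famDiag, mem_iUnion₂, mem_prod, exists_prop]

theorem symmRel_famDiag : SymmRel (famDiag U) := by
  rintro ⟨a, b⟩ h
  obtain ⟨A, hA, ha, hb⟩ := mem_famDiag.1 h
  exact mem_famDiag.2 ⟨A, hA, hb, ha⟩

theorem rcomp_swap (hE : SymmRel E) (hF : SymmRel F) {x z : X} (h : (x, z) ∈ rcomp E F) :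
    (z, x) ∈ rcomp F E := by
  obtain ⟨y, hxy, hyz⟩ := h
  exact ⟨y, hF _ hyz, hE _ hxy⟩

theorem mem_NL {x : X} {V : Set X} :
    x ∈ NL L U V ↔ x ∈ V ∨ ∃ A ∈ U, x ∈ A ∧ LClose L A V := by
  simp only [NL, LClose, mem_union, mem_iUnion, mem_ofPred_eq, exists_prop]
  grind

theorem exists_mem_rel_of_mem_NL {x : X} {V : Set X} (hx : x ∈ NL L U V) :
    ∃ v ∈ V, x = v ∨ (x, v) ∈ rcomp (famDiag U) L := by
  rcases mem_NL.1 hx with hxV | ⟨A, hA, hxA, hAV⟩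
  · exact ⟨x, hxV, Or.inl rfl⟩
  · obtain ⟨a, ha, v, hv, hav⟩ := lClose_iff.1 hAV
    exact ⟨v, hv, Or.inr ⟨a, mem_famDiag.2 ⟨A, hA, hxA, ha⟩, hav⟩⟩

theorem LClose.of_NL_NL (hL : SymmRel L) {V₁ V₂ : Set X}
    (h : LClose L (NL L U V₁) (NL L U V₂)) :
    LClose (L ∪ rcomp (rcomp L (famDiag U)) L ∪
      rcomp (rcomp (rcomp (rcomp L (famDiag U)) L) (famDiag U)) L) V₁ V₂ := by
  obtain ⟨x, hx, y, hy, hxy⟩ := lClose_iff.1 h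
  obtain ⟨v₁, hv₁, hxv₁⟩ := exists_mem_rel_of_mem_NL hx
  obtain ⟨v₂, hv₂, hyv₂⟩ := exists_mem_rel_of_mem_NL hy
  refine lClose_iff.2 ⟨v₁, hv₁, v₂, hv₂, ?_⟩
  rcases hxv₁ with rfl | hxv₁ <;> rcases hyv₂ with rfl | ⟨a₂, hya₂, ha₂v₂⟩
  · exact Or.inl (Or.inl hxy)
  · exact Or.inl (Or.inr ⟨a₂, ⟨y, hxy, hya₂⟩, ha₂v₂⟩)
  all_goals have hv₁x := rcomp_swap symmRel_famDiag hL hxv₁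
  · exact Or.inl (Or.inr ⟨x, hv₁x, hxy⟩)
  · exact Or.inr ⟨a₂, ⟨y, ⟨x, hv₁x, hxy⟩, hya₂⟩, ha₂v₂⟩

theorem LClose.of_NL (hU : LDisj L U) (hA : A ∈ U) {V : Set X}
    (h : LClose L A (NL L U V)) : LClose L A V := by
  obtain ⟨a, ha, x, hx, hax⟩ := lClose_iff.1 h
  rcases mem_NL.1 hx with hxV | ⟨B, hB, hxB, hBV⟩
  · exact lClose_iff.2 ⟨a, ha, x, hxV, hax⟩
  · obtain rfl : A = B := lDisj_iff.1 hU A hA B hB (lClose_iff.2 ⟨a, ha, x, hxB, hax⟩)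
    exact hBV

theorem mem_satUnion_iff {W : Set X} :
    W ∈ satUnion L V U ↔ (∃ B ∈ V, NL L U B = W) ∨ W ∈ U ∧ ∀ B ∈ V, ¬LClose L W B := by
  simp [satUnion, LClose, not_nonempty_iff_eq_empty]

theorem LDisj.satUnion (hL : SymmRel L) (hU : LDisj L U)
    (hV : LDisj (L ∪ rcomp (rcomp L (famDiag U)) L ∪
      rcomp (rcomp (rcomp (rcomp L (famDiag U)) L) (famDiag U)) L) V) :
    LDisj L (satUnion L V U) := by
  refine lDisj_iff.2 fun W₁ hW₁ W₂ hW₂ h => ?_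
  rcases mem_satUnion_iff.1 hW₁ with ⟨V₁, hV₁, rfl⟩ | ⟨hW₁U, hW₁far⟩ <;>
    rcases mem_satUnion_iff.1 hW₂ with ⟨V₂, hV₂, rfl⟩ | ⟨hW₂U, hW₂far⟩
  · rw [lDisj_iff.1 hV V₁ hV₁ V₂ hV₂ (h.of_NL_NL hL)]
  · exact absurd ((h.symm hL).of_NL hU hW₂U) (hW₂far V₁ hV₁)
  · exact absurd (h.of_NL hU hW₁U) (hW₁far V₂ hV₂)
  · exact lDisj_iff.1 hU W₁ hW₁U W₂ hW₂U h

end Relations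

section Boundedness

variable {C : CoarseStructure X} {L : Set (X × X)} {U V W : Set (Set X)}

theorem UnifBdd.mono (hV : UnifBdd C V) (hWV : W ⊆ V) : UnifBdd C W :=
  C.subset_mem hV (biUnion_subset_biUnion_left hWV)

theorem UnifBdd.union (hV : UnifBdd C V) (hW : UnifBdd C W) : UnifBdd C (V ∪ W) := by
  unfold UnifBdd famDiag
  rw [biUnion_union]
  exact C.union_mem hV hW

theorem UnifBdd.image_NL (hL : C.IsEnt L) (hU : UnifBdd C U) (hV : UnifBdd C V) :
    UnifBdd C (NL L U '' V) := by
  set F : Set (X × X) := {p | p.1 = p.2} ∪ rcomp (famDiag U) L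
  have hF : C.IsEnt F := C.union_mem C.diag_mem (C.comp_mem hU hL)
  refine C.subset_mem (C.comp_mem (C.comp_mem hF hV) (C.inv_mem hF)) ?_
  rintro ⟨p, q⟩ hpq
  obtain ⟨-, ⟨B, hB, rfl⟩, hp, hq⟩ := mem_famDiag.1 hpq
  obtain ⟨v, hv, hpv⟩ := exists_mem_rel_of_mem_NL hp
  obtain ⟨w, hw, hqw⟩ := exists_mem_rel_of_mem_NL hq
  exact ⟨w, ⟨v, hpv, mem_famDiag.2 ⟨B, hB, hv, hw⟩⟩, hqw⟩

theorem UnifBdd.satUnion (hL : C.IsEnt L) (hU : UnifBdd C U) (hV : UnifBdd C V) :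
    UnifBdd C (satUnion L V U) :=
  (hU.image_NL hL hV).union (hU.mono fun _ hA => hA.1)

end Boundedness

theorem stmt6_general {X : Type u} (C : CoarseStructure X) (L : Set (X × X))
    (hL : C.IsEnt L) (hsymm : SymmRel L)
    (U V : Set (Set X))
    (hUb : UnifBdd C U) (hUd : LDisj L U) (hVb : UnifBdd C V)
    (hVd : LDisj (L ∪ rcomp (rcomp L (famDiag U)) L ∪
      rcomp (rcomp (rcomp (rcomp L (famDiag U)) L) (famDiag U)) L) V) :
    LDisj L (satUnion L V U) ∧ UnifBdd C (satUnion L V U) :=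
  ⟨LDisj.satUnion hsymm hUd hVd, UnifBdd.satUnion hL hUb hVb⟩

/-- the `L`-saturated union of a uniformly bounded `K`-disjoint family `V`
with a uniformly bounded `L`-disjoint family `U` is `L`-disjoint and uniformly bounded,
where `K = L ∪ (L ∘ Δ_U ∘ L) ∪ (L ∘ Δ_U ∘ L ∘ Δ_U ∘ L)`. -/
theorem stmt6 {X : Type u} (C : CoarseStructure X) (L : Set (X × X))
    (hL : C.IsEnt L) (hsymm : SymmRel L) (hdiag : ∀ x : X, (x, x) ∈ L)
    (U V : Set (Set X))
    (hUb : UnifBdd C U) (hUd : LDisj L U) (hVb : UnifBdd C V)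
    (hVd : LDisj (L ∪ rcomp (rcomp L (famDiag U)) L ∪
      rcomp (rcomp (rcomp (rcomp L (famDiag U)) L) (famDiag U)) L) V) :
    LDisj L (satUnion L V U) ∧ UnifBdd C (satUnion L V U) :=
  stmt6_general C L hL hsymm U V hUb hUd hVb hVd
end

section
/- If a coarse space (X, E) is a union X = X₁ ∪ X₂ of two subspaces (with the inherited coarse structures) each having coarse property C, then X has coarse property C. -/
open Set
open scoped ENNReal

universe u v

variable {X : Type u} {Y : Type v}

def seqAppend {α : Type*} (n : ℕ) (f g : ℕ → α) : ℕ → α :=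
  fun i => if i < n then f i else g (i - n)

section seqAppend

variable {α : Type*} {n m : ℕ} {f g : ℕ → α}

theorem seqAppend_of_lt {i : ℕ} (h : i < n) : seqAppend n f g i = f i := if_pos h

theorem seqAppend_add (i : ℕ) : seqAppend n f g (i + n) = g i := by
  simp [seqAppend]

theorem forall_lt_add_seqAppend {P : ℕ → α → Prop} (hf : ∀ i < n, P i (f i))
    (hg : ∀ i < m, P (i + n) (g i)) : ∀ i < n + m, P i (seqAppend n f g i) := by
  intro i hi
  by_cases hin : i < n
  · rw [seqAppend_of_lt hin]
    exact hf i hin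
  · obtain ⟨j, rfl⟩ : ∃ j, i = j + n := ⟨i - n, by omega⟩
    rw [seqAppend_add]
    exact hg j (by omega)

theorem exists_lt_add_seqAppend {P : α → Prop}
    (h : (∃ i < n, P (f i)) ∨ ∃ i < m, P (g i)) : ∃ i < n + m, P (seqAppend n f g i) := by
  rcases h with ⟨i, hi, hP⟩ | ⟨i, hi, hP⟩
  · exact ⟨i, by omega, by rwa [seqAppend_of_lt hi]⟩
  · exact ⟨i + n, by omega, by rwa [seqAppend_add]⟩

end seqAppend

/-- Use the first `n` scales of `L` for `S` and the remaining ones for `T`. -/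
theorem CoarsePropCOn.union {C : CoarseStructure X} {S T : Set X} (hS : CoarsePropCOn C S)
    (hT : CoarsePropCOn C T) : CoarsePropCOn C (S ∪ T) := by
  intro L hL hmono
  obtain ⟨n, U, hUS, hUcov, hUbdd, hUdisj⟩ := hS L hL hmono
  obtain ⟨m, V, hVT, hVcov, hVbdd, hVdisj⟩ := hT (fun i => L (i + n)) (fun i => hL _)
    (fun i => by simpa only [Nat.add_right_comm] using hmono (i + n))
  refine ⟨n + m, seqAppend n U V, ?_, ?_, ?_, ?_⟩
  · exact forall_lt_add_seqAppend (P := fun _ W => ∀ A ∈ W, A ⊆ S ∪ T)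
      (fun i hi A hA => (hUS i hi A hA).trans subset_union_left)
      (fun i hi A hA => (hVT i hi A hA).trans subset_union_right)
  · rintro x (hx | hx)
    exacts [exists_lt_add_seqAppend (P := fun W => ∃ A ∈ W, x ∈ A) (.inl (hUcov x hx)),
      exists_lt_add_seqAppend (P := fun W => ∃ A ∈ W, x ∈ A) (.inr (hVcov x hx))]
  · exact forall_lt_add_seqAppend (P := fun _ W => UnifBdd C W) hUbdd hVbdd
  · exact forall_lt_add_seqAppend (P := fun i W => LDisj (L i) W) hUdisj hVdisj

theorem CoarsePropCOn.coarsePropC {C : CoarseStructure X} (h : CoarsePropCOn C univ) :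
    CoarsePropC C := fun L hL hmono =>
  let ⟨n, U, _, hcov, hbdd, hdisj⟩ := h L hL hmono
  ⟨n, U, fun x => hcov x (mem_univ x), hbdd, hdisj⟩

/-- a union of two subspaces with coarse property C has coarse property C. -/
theorem stmt7 {X : Type u} (C : CoarseStructure X) (S1 S2 : Set X)
    (hcover : S1 ∪ S2 = Set.univ)
    (h1 : CoarsePropCOn C S1) (h2 : CoarsePropCOn C S2) :
    CoarsePropC C := by
  have h : CoarsePropCOn C (S1 ∪ S2) := h1.union h2
  rw [hcover] at h
  exact h.coarsePropC
end

section
/- If a coarse space (X, E) satisfies as_C X ≤ n (coarse asymptotic dimension at most n), then X has coarse property C. -/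
open Set
open scoped ENNReal

universe u v

variable {X : Type u} {Y : Type v}

theorem LDisj.mono {L L' : Set (X × X)} {U : Set (Set X)} (hL : L ⊆ L') (h : LDisj L' U) :
    LDisj L U := fun A hA B hB hAB =>
  subset_empty_iff.mp (h A hA B hB hAB ▸ inter_subset_inter_right _ hL)

-- One cover for the largest entourage `L n` serves all of `L 0, …, L n` at once.
/-- finite coarse asymptotic dimension implies coarse property C. -/
theorem stmt8 {X : Type u} (C : CoarseStructure X) (n : ℕ)
    (h : CoarseASDimLE C n) : CoarsePropC C := by
  intro L hL hmono
  obtain ⟨U, hcov, hbdd, hdisj⟩ := h (L n) (hL n)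
  refine ⟨n + 1, U, fun x => ?_, fun i hi => hbdd i (Nat.lt_succ_iff.mp hi), fun i hi => ?_⟩
  · obtain ⟨i, hi, A, hA, hx⟩ := hcov x
    exact ⟨i, Nat.lt_succ_of_le hi, A, hA, hx⟩
  · have hi : i ≤ n := Nat.lt_succ_iff.mp hi
    exact (hdisj i hi).mono (monotone_nat_of_le_succ hmono hi)
end

section
/- If a coarse space (X, E) has coarse property C, then X has straight finite coarse decomposition complexity. -/
open Set
open scoped ENNReal

universe u v

variable {X : Type u} {Y : Type v}

/-! Let `U 0, …, U (n-1)` be the families given by property C for the sequence `L`, and let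
`R i = uncovered U i` be the part of `X` not covered by `U 0, …, U (i-1)`. At step `i`, `R i` is
split into the `L i`-disjoint pieces `A ∩ R i`, `A ∈ U i`, and the single set `R (i+1)`; pieces
made at earlier steps are carried along unchanged. Since the `U i` cover `X`, `R n` is empty, and
every remaining piece lies in a member of some `U j`, so the final family is uniformly bounded. -/

namespace CoarseStructure

variable {X : Type u} (C : CoarseStructure X)

theorem isEnt_empty : C.IsEnt ∅ :=
  C.subset_mem C.diag_mem (empty_subset _)

theorem isEnt_biUnion_lt (G : ℕ → Set (X × X)) :
    ∀ n, (∀ j < n, C.IsEnt (G j)) → C.IsEnt (⋃ j < n, G j)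
  | 0, _ => by simpa using C.isEnt_empty
  | n + 1, hG => by
    rw [biUnion_lt_succ]
    exact C.union_mem (isEnt_biUnion_lt G n fun j hj => hG j (hj.trans n.lt_succ_self))
      (hG n n.lt_succ_self)

end CoarseStructure

section Families

variable {X : Type u} {L : Set (X × X)} {U Y : Set (Set X)} {Z : Set X}

theorem famDiag_insert_empty (U : Set (Set X)) : famDiag (insert ∅ U) = famDiag U := by
  simp [famDiag]

theorem famDiag_image_inter_subset (U : Set (Set X)) (S : Set X) :
    famDiag ((· ∩ S) '' U) ⊆ famDiag U := by
  simp only [famDiag, biUnion_image]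
  exact biUnion_mono subset_rfl fun A _ => prod_mono inter_subset_left inter_subset_left

theorem famDiag_biUnion_lt (U : ℕ → Set (Set X)) (n : ℕ) :
    famDiag (⋃ j < n, U j) = ⋃ j < n, famDiag (U j) := by
  simp only [famDiag, biUnion_iUnion]

theorem UnifBdd.image_inter {C : CoarseStructure X} (h : UnifBdd C U) (S : Set X) :
    UnifBdd C ((· ∩ S) '' U) :=
  C.subset_mem h (famDiag_image_inter_subset U S)

theorem unifBdd_biUnion_lt {C : CoarseStructure X} {U : ℕ → Set (Set X)} {n : ℕ}
    (h : ∀ j < n, UnifBdd C (U j)) : UnifBdd C (⋃ j < n, U j) := by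
  rw [UnifBdd, famDiag_biUnion_lt]
  exact C.isEnt_biUnion_lt _ n h

theorem ldisj_empty : LDisj L (∅ : Set (Set X)) := by
  simp [LDisj]

theorem ldisj_singleton (A : Set X) : LDisj L {A} := by
  simp [LDisj]

theorem LDisj.image_inter (h : LDisj L U) (S : Set X) : LDisj L ((· ∩ S) '' U) := by
  rintro _ ⟨A, hA, rfl⟩ _ ⟨B, hB, rfl⟩ hne
  have hAB : A ≠ B := by rintro rfl; exact hne rfl
  exact subset_empty_iff.mp <| (h A hA B hB hAB).subst <|
    inter_subset_inter_left _ (prod_mono inter_subset_left inter_subset_left)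

theorem weakDecomp_two {P Q : Set (Set X)} (hP : P ⊆ Y) (hQ : Q ⊆ Y)
    (hPL : LDisj L P) (hQL : LDisj L Q) (hZ : Z = ⋃₀ P ∪ ⋃₀ Q) : WeakDecomp L 2 Z Y := by
  refine ⟨![P, Q], ?_, ?_, ?_⟩
  · intro i; fin_cases i <;> assumption
  · intro i; fin_cases i <;> assumption
  · ext x
    simp [hZ, Fin.exists_fin_two]

theorem weakDecomp_of_mem (h : Z ∈ Y) : WeakDecomp L 2 Z Y :=
  weakDecomp_two (singleton_subset_iff.mpr h) (empty_subset Y) (ldisj_singleton Z) ldisj_empty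
    (by simp)

theorem weakDecomp_inter_diff_sUnion (hU : LDisj L U) (hY : (· ∩ Z) '' U ⊆ Y)
    (hZ : Z \ ⋃₀ U ∈ Y) : WeakDecomp L 2 Z Y := by
  refine weakDecomp_two hY (singleton_subset_iff.mpr hZ) (hU.image_inter Z) (ldisj_singleton _) ?_
  ext x
  simp only [sUnion_image, mem_union, mem_iUnion, mem_inter_iff, sUnion_singleton, mem_sdiff,
    mem_sUnion]
  by_cases hx : ∃ A ∈ U, x ∈ A <;> grind

end Families

section Peeling

variable {X : Type u} (U : ℕ → Set (Set X))

def uncovered (i : ℕ) : Set X := ⋂ j < i, (⋃₀ U j)ᶜ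

def peelStage (i : ℕ) : Set (Set X) :=
  insert (uncovered U i) (⋃ j < i, (· ∩ uncovered U j) '' U j)

theorem uncovered_zero : uncovered U 0 = univ := by
  simp [uncovered]

theorem uncovered_succ (i : ℕ) : uncovered U (i + 1) = uncovered U i \ ⋃₀ U i := by
  rw [uncovered, biInter_lt_succ, sdiff_eq]; rfl

theorem uncovered_eq_empty {n : ℕ} (h : ∀ x : X, ∃ i < n, ∃ A ∈ U i, x ∈ A) :
    uncovered U n = ∅ := by
  refine eq_empty_of_forall_notMem fun x hx => ?_
  obtain ⟨i, hi, A, hA, hxA⟩ := h x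
  exact mem_iInter₂.mp hx i hi (mem_sUnion_of_mem hxA hA)

theorem peelStage_zero : peelStage U 0 = {univ} := by
  simp [peelStage, uncovered_zero]

theorem famDecomp_peelStage {L : Set (X × X)} {i : ℕ} (hU : LDisj L (U i)) :
    FamDecomp L 2 (peelStage U i) (peelStage U (i + 1)) := by
  have hpieces : ∀ j ≤ i, (· ∩ uncovered U j) '' U j ⊆ peelStage U (i + 1) := fun j hj =>
    (subset_iUnion₂ (s := fun j (_ : j < i + 1) => (· ∩ uncovered U j) '' U j) j
      (Nat.lt_succ_of_le hj)).trans (subset_insert _ _)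
  rintro Z (rfl | hZ)
  · refine weakDecomp_inter_diff_sUnion hU (hpieces i le_rfl) ?_
    rw [← uncovered_succ]
    exact mem_insert _ _
  · obtain ⟨j, hj, hZj⟩ := mem_iUnion₂.mp hZ
    exact weakDecomp_of_mem (hpieces j hj.le hZj)

theorem unifBdd_peelStage {C : CoarseStructure X} {n : ℕ} (hbdd : ∀ j < n, UnifBdd C (U j))
    (hcov : ∀ x : X, ∃ i < n, ∃ A ∈ U i, x ∈ A) : UnifBdd C (peelStage U n) := by
  rw [UnifBdd, peelStage, uncovered_eq_empty U hcov, famDiag_insert_empty]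
  exact unifBdd_biUnion_lt fun j hj => (hbdd j hj).image_inter _

end Peeling

/-- coarse property C implies straight finite coarse decomposition
complexity. -/
theorem stmt9 {X : Type u} (C : CoarseStructure X) (h : CoarsePropC C) :
    sFCDC C {Set.univ} := by
  intro L hL hmono
  obtain ⟨n, U, hcov, hbdd, hdisj⟩ := h L hL hmono
  exact ⟨n, peelStage U, peelStage_zero U, fun i hi => famDecomp_peelStage U (hdisj i hi),
    unifBdd_peelStage U hbdd hcov⟩
end

section
/- Let X, Y, Z be families of subspaces of a coarse space (W, E), and let L₁, L₂ be entourages. If X admits a weak (L₁, d₁)-decomposition over Y and Y admits a weak (L₂, d₂)-decomposition over Z, then X admits a weak (L₁ ∩ L₂, d₁·d₂)-decomposition over Z. -/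
open Set
open scoped ENNReal

universe u v

variable {X : Type u} {Y : Type v}

/-!
Refine every piece `A` of colour `i` of the `(L₁, d₁)`-decomposition by its own
`(L₂, d₂)`-decomposition and give the resulting pieces the colours `(i, j)`. Two distinct pieces
of the same colour either lie in one `A`, so they are `L₂`-disjoint, or in two distinct pieces
of colour `i`, so they are `L₁`-disjoint.
-/

theorem subset_of_eq_iUnion_biUnion {d : ℕ} {P : Fin d → Set (Set X)} {Z : Set X} (hZ : Z = ⋃ i, ⋃ A ∈ P i, A)
    {i : Fin d} {A : Set X} (hA : A ∈ P i) : A ⊆ Z :=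
  hZ ▸ subset_iUnion_of_subset i (subset_biUnion_of_mem (u := id) hA)

theorem LDisj.biUnion {L L' : Set (X × X)} {P : Set (Set X)} {Q : Set X → Set (Set X)}
    (hP : LDisj L P) (hQ : ∀ A ∈ P, LDisj L' (Q A)) (hQP : ∀ A ∈ P, ∀ B ∈ Q A, B ⊆ A) :
    LDisj (L ∩ L') (⋃ A ∈ P, Q A) := by
  simp only [LDisj, mem_iUnion₂]
  rintro B ⟨A, hA, hB⟩ B' ⟨A', hA', hB'⟩ hne
  rw [← subset_empty_iff]
  rcases eq_or_ne A A' with rfl | hAA'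
  · rw [← hQ A hA B hB B' hB' hne]
    exact inter_subset_inter_right _ inter_subset_right
  · rw [← hP A hA A' hA' hAA']
    exact inter_subset_inter (prod_mono (hQP A hA B hB) (hQP A' hA' B' hB')) inter_subset_left

theorem WeakDecomp.trans {L1 L2 : Set (X × X)} {d1 d2 : ℕ} {Z : Set X} {FY FZ : Set (Set X)}
    (hZ : WeakDecomp L1 d1 Z FY) (hFY : FamDecomp L2 d2 FY FZ) :
    WeakDecomp (L1 ∩ L2) (d1 * d2) Z FZ := by
  obtain ⟨P, hPY, hPdisj, rfl⟩ := hZ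
  choose! Q hQZ hQdisj hQeq using hFY
  let R : Fin d1 × Fin d2 → Set (Set X) := fun ij => ⋃ A ∈ P ij.1, Q A ij.2
  refine ⟨R ∘ finProdFinEquiv.symm, fun k => ?_, fun k => ?_, ?_⟩
  · exact iUnion₂_subset fun A hA => hQZ A (hPY _ hA) _
  · exact (hPdisj _).biUnion (fun A hA => hQdisj A (hPY _ hA) _)
      fun A hA B hB => subset_of_eq_iUnion_biUnion (hQeq A (hPY _ hA)) hB
  · calc ⋃ i, ⋃ A ∈ P i, A = ⋃ i, ⋃ A ∈ P i, ⋃ j, ⋃ B ∈ Q A j, B :=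
          iUnion_congr fun i => iUnion₂_congr fun A hA => hQeq A (hPY i hA)
      _ = ⋃ ij, ⋃ B ∈ R ij, B := by
          simp only [R, iUnion_prod', biUnion_iUnion]
          refine iUnion_congr fun i => ?_
          rw [iUnion_comm]
          exact iUnion_congr fun A => iUnion_comm _
      _ = ⋃ k, ⋃ B ∈ (R ∘ finProdFinEquiv.symm) k, B :=
          (finProdFinEquiv.symm.iSup_comp (g := fun ij => ⋃ B ∈ R ij, B)).symm

theorem stmt11_general {W : Type u} (L1 L2 : Set (W × W))
    (FX FY FZ : Set (Set W)) (d1 d2 : ℕ)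
    (hXY : FamDecomp L1 d1 FX FY) (hYZ : FamDecomp L2 d2 FY FZ) :
    FamDecomp (L1 ∩ L2) (d1 * d2) FX FZ :=
  fun Z hZ => (hXY Z hZ).trans hYZ

/-- composing a weak `(L₁,d₁)`-decomposition with a weak
`(L₂,d₂)`-decomposition yields a weak `(L₁ ∩ L₂, d₁·d₂)`-decomposition. -/
theorem stmt11 {W : Type u} (C : CoarseStructure W) (L1 L2 : Set (W × W))
    (hL1 : C.IsEnt L1) (hL2 : C.IsEnt L2)
    (FX FY FZ : Set (Set W)) (d1 d2 : ℕ)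
    (hXY : FamDecomp L1 d1 FX FY) (hYZ : FamDecomp L2 d2 FY FZ) :
    FamDecomp (L1 ∩ L2) (d1 * d2) FX FZ :=
  stmt11_general L1 L2 FX FY FZ d1 d2 hXY hYZ
end

section
/- If a coarse space (X, E) has straight finite coarse decomposition complexity, then X has finite weak coarse decomposition complexity: for every entourage L there exists d and a uniformly bounded family Y such that X admits a weak (L, d)-decomposition over Y. -/
open Set
open scoped ENNReal

universe u v

variable {X : Type u} {Y : Type v}

/-! Apply straight finite decomposition complexity to the constant sequence `L, L, …`: refining
each piece of a weak `(L, d₁)`-decomposition by weak `(L, d₂)`-decompositions gives a weak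
`(L, d₁d₂)`-decomposition, so the `n` two-piece steps compose to a weak `(L, 2ⁿ)`-decomposition
of `X` over the uniformly bounded last family. -/

namespace WeakDecomp

theorem self (L : Set (X × X)) (Z : Set X) : WeakDecomp L 1 Z {Z} := by
  refine ⟨fun _ => {Z}, fun _ => subset_rfl, fun _ A hA B hB hne => ?_, ?_⟩
  · exact absurd (hA.trans hB.symm) hne
  · simp only [mem_singleton_iff, iUnion_iUnion_eq_left, iUnion_const]

theorem trans_s12 {L : Set (X × X)} {d₁ d₂ : ℕ} {Z : Set X} {F G : Set (Set X)}
    (hZ : WeakDecomp L d₁ Z F) (hF : FamDecomp L d₂ F G) : WeakDecomp L (d₁ * d₂) Z G := by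
  obtain ⟨P, hPF, hPdisj, rfl⟩ := hZ
  choose Q hQG hQdisj hQcov using hF
  have subset_of_mem : ∀ A (hA : A ∈ F) j, ∀ B ∈ Q A hA j, B ⊆ A := fun A hA j B hB x hx => by
    rw [hQcov A hA]
    exact mem_iUnion.mpr ⟨j, mem_biUnion hB hx⟩
  let R : Fin d₁ × Fin d₂ → Set (Set X) := fun p =>
    {B | ∃ A, ∃ hA : A ∈ P p.1, B ∈ Q A (hPF p.1 hA) p.2}
  refine ⟨R ∘ finProdFinEquiv.symm, ?_, ?_, ?_⟩
  · rintro k B ⟨A, hA, hB⟩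
    exact hQG A _ _ hB
  · rintro k B ⟨A, hA, hB⟩ B' ⟨A', hA', hB'⟩ hne
    by_cases hAA' : A = A'
    · subst hAA'
      exact hQdisj A _ _ B hB B' hB' hne
    · refine subset_empty_iff.mp ?_
      rw [← hPdisj _ A hA A' hA' hAA']
      exact inter_subset_inter_left L
        (prod_mono (subset_of_mem A _ _ B hB) (subset_of_mem A' _ _ B' hB'))
  · ext x
    simp only [mem_iUnion, Function.comp_apply]
    constructor
    · rintro ⟨i, A, hA, hxA⟩
      rw [hQcov A (hPF i hA)] at hxA
      simp only [mem_iUnion] at hxA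
      obtain ⟨j, B, hB, hxB⟩ := hxA
      exact ⟨finProdFinEquiv (i, j), B, by simpa [R] using ⟨A, hA, hB⟩, hxB⟩
    · rintro ⟨k, B, ⟨A, hA, hB⟩, hxB⟩
      exact ⟨_, A, hA, subset_of_mem A _ _ B hB hxB⟩

end WeakDecomp

theorem weakDecomp_pow_of_famDecomp {L : Set (X × X)} {d : ℕ} {Z : Set X}
    {Y : ℕ → Set (Set X)} (hY₀ : Y 0 = {Z}) :
    ∀ n, (∀ i < n, FamDecomp L d (Y i) (Y (i + 1))) → WeakDecomp L (d ^ n) Z (Y n)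
  | 0, _ => by simpa [hY₀] using WeakDecomp.self L Z
  | n + 1, hY =>
    (weakDecomp_pow_of_famDecomp hY₀ n fun i hi => hY i (by omega)).trans_s12 (hY n n.lt_succ_self)

/-- straight finite coarse decomposition complexity implies finite weak
coarse decomposition complexity. -/
theorem stmt12 {X : Type u} (C : CoarseStructure X)
    (h : sFCDC C {Set.univ}) : FWCDC C := by
  intro L hL
  obtain ⟨n, Y, hY₀, hY, hbdd⟩ := h (fun _ => L) (fun _ => hL) (fun _ => subset_rfl)
  exact ⟨2 ^ n, Y n, hbdd, weakDecomp_pow_of_famDecomp hY₀ n hY⟩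
end

section
/- Let f : X → Y be a bornologous map of coarse spaces. If Y has straight finite coarse decomposition complexity and for every uniformly bounded family V of subsets of Y the family f⁻¹(V) = {f⁻¹(V) : V ∈ V} has straight finite coarse decomposition complexity, then X has straight finite coarse decomposition complexity. -/
open Set
open scoped ENNReal

universe u v

variable {X : Type u} {Y : Type v}

/-!
Push the entourages `L i` forward along `f` and decompose `Y` in `m` steps down to a uniformly
bounded family `W`. Pulling these steps back gives `m` steps for `X` ending at `f⁻¹(W)`, which by
hypothesis can be decomposed further, against the shifted entourages `L (m + i)`, down to a
uniformly bounded family; the two chains concatenate.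
-/

-- The middle clause of `sFCDC` is `DecompChain L 2 n Y` by definition.
def DecompChain (L : ℕ → Set (X × X)) (d n : ℕ) (Y : ℕ → Set (Set X)) : Prop :=
  ∀ i < n, FamDecomp (L i) d (Y i) (Y (i + 1))

theorem WeakDecomp.preimage {L : Set (X × X)} {M : Set (Y × Y)} {d : ℕ} {Z : Set Y}
    {G : Set (Set Y)} (f : X → Y) (hLM : L ⊆ mapProd f ⁻¹' M) (h : WeakDecomp M d Z G) :
    WeakDecomp L d (f ⁻¹' Z) ((fun A => f ⁻¹' A) '' G) := by
  obtain ⟨P, hPG, hPdisj, rfl⟩ := h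
  refine ⟨fun j => (fun A => f ⁻¹' A) '' P j, fun j => image_mono (hPG j), ?_, ?_⟩
  · rintro j _ ⟨A, hA, rfl⟩ _ ⟨B, hB, rfl⟩ hne
    have hAB : A ≠ B := by rintro rfl; exact hne rfl
    refine eq_empty_of_forall_notMem fun p ⟨hp, hpL⟩ => ?_
    have hfp : mapProd f p ∈ (A ×ˢ B) ∩ M := ⟨hp, hLM hpL⟩
    rw [hPdisj j A hA B hB hAB] at hfp
    exact hfp
  · simp only [preimage_iUnion, biUnion_image]

theorem FamDecomp.preimage {L : Set (X × X)} {M : Set (Y × Y)} {d : ℕ} {F G : Set (Set Y)}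
    (f : X → Y) (hLM : L ⊆ mapProd f ⁻¹' M) (h : FamDecomp M d F G) :
    FamDecomp L d ((fun A => f ⁻¹' A) '' F) ((fun A => f ⁻¹' A) '' G) := by
  rintro _ ⟨Z, hZ, rfl⟩
  exact (h Z hZ).preimage f hLM

theorem DecompChain.preimage {L : ℕ → Set (X × X)} {d n : ℕ} {W : ℕ → Set (Set Y)}
    (f : X → Y) (h : DecompChain (fun i => mapProd f '' L i) d n W) :
    DecompChain L d n (fun i => (fun A => f ⁻¹' A) '' W i) :=
  fun i hi => (h i hi).preimage f (subset_preimage_image _ _)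

theorem DecompChain.append {L : ℕ → Set (X × X)} {d m k : ℕ} {Y Z : ℕ → Set (Set X)}
    (hY : DecompChain L d m Y) (hZ : DecompChain (fun i => L (m + i)) d k Z)
    (hYZ : Y m = Z 0) :
    DecompChain L d (m + k) (fun i => if i < m then Y i else Z (i - m)) := by
  intro i hi
  by_cases him : i < m
  · have hstep := hY i him
    rcases Nat.lt_or_ge (i + 1) m with hlt | hge
    · simpa only [if_pos him, if_pos hlt] using hstep
    · obtain rfl : m = i + 1 := by omega
      simpa only [if_pos him, lt_irrefl, if_false, Nat.sub_self, hYZ] using hstep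
  · have him' : m ≤ i := not_lt.1 him
    have hstep := hZ (i - m) (by omega)
    simp only [Nat.add_sub_cancel' him', ← Nat.sub_add_comm him'] at hstep
    simpa only [if_neg him, if_neg (by omega : ¬i + 1 < m)] using hstep

/-- fibering: if `f : X → Y` is bornologous, `Y` has straight finite
coarse decomposition complexity, and the preimage family of every uniformly bounded
family of subsets of `Y` has straight finite coarse decomposition complexity, then so
does `X`. -/
theorem stmt15 {X : Type u} {Y : Type v} (CX : CoarseStructure X) (CY : CoarseStructure Y)
    (f : X → Y) (hf : Bornologous CX CY f)
    (hY : sFCDC CY {Set.univ})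
    (hfib : ∀ V : Set (Set Y), UnifBdd CY V → sFCDC CX ((fun A => f ⁻¹' A) '' V)) :
    sFCDC CX {Set.univ} := by
  intro L hL hLmono
  obtain ⟨m, W, hW0, hW, hWbdd⟩ :=
    hY (fun i => mapProd f '' L i) (fun i => hf _ (hL i)) (fun i => image_mono (hLmono i))
  obtain ⟨k, Z, hZ0, hZ, hZbdd⟩ :=
    hfib (W m) hWbdd (fun i => L (m + i)) (fun i => hL _) (fun i => hLmono _)
  refine ⟨m + k, _, ?_, (DecompChain.preimage f hW).append hZ hZ0.symm, ?_⟩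
  · have hpull0 : (fun A => f ⁻¹' A) '' W 0 = {univ} := by simp [hW0]
    split_ifs with hm
    · exact hpull0
    · rw [Nat.eq_zero_of_not_pos hm] at hZ0 ⊢
      exact hZ0.trans hpull0
  · simpa only [if_neg (by omega : ¬m + k < m), Nat.add_sub_cancel_left] using hZbdd
end

section
/- Let (X, E) and (Y, F) be coarse spaces with straight finite coarse decomposition complexity, and give Z = X × Y the product coarse structure. Then Z has straight finite coarse decomposition complexity. -/
open Set
open scoped ENNReal

universe u v

variable {X : Type u} {Y : Type v}

/-
A decomposition of `A ⊆ X` whose pieces are disjoint for the `X`-projection of `L` yields an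
`L`-disjoint decomposition of `A ×ˢ B` into the pieces `A' ×ˢ B`, and symmetrically in `Y`. So
first decompose the `X`-factor, using the `X`-projections of `L 0, …, L (n - 1)`, until it is
uniformly bounded, and then the `Y`-factor, using the `Y`-projections of `L n, L (n + 1), …`.
Stage `i` consists of the products `A ×ˢ B` with `A` from stage `min i n` over `X` and `B` from
stage `i - n` over `Y`; truncated subtraction keeps `B` at the initial family while `i ≤ n`.
-/

section Product

variable {L : Set ((X × Y) × (X × Y))} {d : ℕ}

lemma LDisj.image_prod_right {P : Set (Set X)} (h : LDisj (pfst '' L) P) (B : Set Y) :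
    LDisj L ((· ×ˢ B) '' P) := by
  rintro _ ⟨A, hA, rfl⟩ _ ⟨A', hA', rfl⟩ hne
  refine eq_empty_iff_forall_notMem.2 ?_
  rintro p ⟨⟨⟨h1, -⟩, h2, -⟩, hpL⟩
  exact eq_empty_iff_forall_notMem.1 (h A hA A' hA' (ne_of_apply_ne (· ×ˢ B) hne)) _
    ⟨⟨h1, h2⟩, p, hpL, rfl⟩

lemma LDisj.image_prod_left {P : Set (Set Y)} (h : LDisj (psnd '' L) P) (A : Set X) :
    LDisj L ((A ×ˢ ·) '' P) := by
  rintro _ ⟨B, hB, rfl⟩ _ ⟨B', hB', rfl⟩ hne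
  refine eq_empty_iff_forall_notMem.2 ?_
  rintro p ⟨⟨⟨-, h1⟩, -, h2⟩, hpL⟩
  exact eq_empty_iff_forall_notMem.1 (h B hB B' hB' (ne_of_apply_ne (A ×ˢ ·) hne)) _
    ⟨⟨h1, h2⟩, p, hpL, rfl⟩

lemma WeakDecomp.prod_right {A : Set X} {U : Set (Set X)} {B : Set Y} {V : Set (Set Y)}
    (h : WeakDecomp (pfst '' L) d A U) (hB : B ∈ V) :
    WeakDecomp L d (A ×ˢ B) (image2 (· ×ˢ ·) U V) := by
  obtain ⟨P, hPU, hPdisj, rfl⟩ := h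
  refine ⟨fun k => (· ×ˢ B) '' P k, fun k => ?_, fun k => (hPdisj k).image_prod_right B, ?_⟩
  · rintro _ ⟨A', hA', rfl⟩
    exact mem_image2_of_mem (hPU k hA') hB
  · simp only [biUnion_image, iUnion_prod_const]

lemma WeakDecomp.prod_left {A : Set X} {U : Set (Set X)} {B : Set Y} {V : Set (Set Y)}
    (hA : A ∈ U) (h : WeakDecomp (psnd '' L) d B V) :
    WeakDecomp L d (A ×ˢ B) (image2 (· ×ˢ ·) U V) := by
  obtain ⟨P, hPV, hPdisj, rfl⟩ := h
  refine ⟨fun k => (A ×ˢ ·) '' P k, fun k => ?_, fun k => (hPdisj k).image_prod_left A, ?_⟩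
  · rintro _ ⟨B', hB', rfl⟩
    exact mem_image2_of_mem hA (hPV k hB')
  · simp only [biUnion_image, prod_iUnion]

lemma FamDecomp.prod_right {U U' : Set (Set X)} (h : FamDecomp (pfst '' L) d U U')
    (V : Set (Set Y)) : FamDecomp L d (image2 (· ×ˢ ·) U V) (image2 (· ×ˢ ·) U' V) := by
  rintro _ ⟨A, hA, B, hB, rfl⟩
  exact (h A hA).prod_right hB

lemma FamDecomp.prod_left {V V' : Set (Set Y)} (U : Set (Set X))
    (h : FamDecomp (psnd '' L) d V V') :
    FamDecomp L d (image2 (· ×ˢ ·) U V) (image2 (· ×ˢ ·) U V') := by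
  rintro _ ⟨A, hA, B, hB, rfl⟩
  exact (h B hB).prod_left hA

end Product

lemma UnifBdd.prod {CX : CoarseStructure X} {CY : CoarseStructure Y} {U : Set (Set X)}
    {V : Set (Set Y)} (hU : UnifBdd CX U) (hV : UnifBdd CY V) :
    UnifBdd (prodCoarse CX CY) (image2 (· ×ˢ ·) U V) := by
  constructor
  · refine CX.subset_mem hU ?_
    rintro _ ⟨p, hp, rfl⟩
    simp only [famDiag, mem_iUnion] at hp ⊢
    obtain ⟨_, ⟨A, hA, B, -, rfl⟩, ⟨h1, -⟩, h2, -⟩ := hp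
    exact ⟨A, hA, h1, h2⟩
  · refine CY.subset_mem hV ?_
    rintro _ ⟨p, hp, rfl⟩
    simp only [famDiag, mem_iUnion] at hp ⊢
    obtain ⟨_, ⟨A, -, B, hB, rfl⟩, ⟨-, h1⟩, -, h2⟩ := hp
    exact ⟨B, hB, h1, h2⟩

theorem sFCDC.prod {CX : CoarseStructure X} {CY : CoarseStructure Y} {U : Set (Set X)}
    {V : Set (Set Y)} (hU : sFCDC CX U) (hV : sFCDC CY V) :
    sFCDC (prodCoarse CX CY) (image2 (· ×ˢ ·) U V) := by
  intro L hL hLmono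
  obtain ⟨n, UX, hUX0, hUXdecomp, hUXbdd⟩ :=
    hU (fun i => pfst '' L i) (fun i => (hL i).1) (fun i => image_mono (hLmono i))
  obtain ⟨m, VY, hVY0, hVYdecomp, hVYbdd⟩ :=
    hV (fun j => psnd '' L (n + j)) (fun j => (hL (n + j)).2)
      (fun j => image_mono (hLmono (n + j)))
  refine ⟨n + m, fun i => image2 (· ×ˢ ·) (UX (min i n)) (VY (i - n)), ?_, fun i hi => ?_, ?_⟩
  · simp [hUX0, hVY0]
  · dsimp only
    rcases lt_or_ge i n with hin | hni
    · rw [min_eq_left hin.le, min_eq_left hin, Nat.sub_eq_zero_of_le hin,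
        Nat.sub_eq_zero_of_le hin.le]
      exact (hUXdecomp i hin).prod_right _
    · have hVYi := hVYdecomp (i - n) (by omega)
      rw [Nat.add_sub_cancel' hni] at hVYi
      rw [min_eq_right hni, min_eq_right (by omega), Nat.sub_add_comm hni]
      exact FamDecomp.prod_left _ hVYi
  · simpa using hUXbdd.prod hVYbdd

/-- a product of two coarse spaces with straight finite coarse
decomposition complexity has straight finite coarse decomposition complexity. -/
theorem stmt16 {X : Type u} {Y : Type v} (CX : CoarseStructure X) (CY : CoarseStructure Y)
    (hX : sFCDC CX {Set.univ}) (hY : sFCDC CY {Set.univ}) :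
    sFCDC (prodCoarse CX CY) {(Set.univ : Set (X × Y))} := by
  simpa using hX.prod hY
end
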